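/- Rely/guarantee rule for while-statements: let G be a reflexive state relation and assume (1) R '' P ⊆ P (stability of P under R); (2) ρ ⊨ {R, P ∩ C} p {P, G}; (3) ρ ⊨ {R, P ∩ ¬C} q {Q, G}, where ¬C denotes the complement of the state predicate C. Then ρ ⊨ {R, P} while C p q {Q, G}. -/

import Mathlib

inductive Lang (α : Type) : Type
  | skip : Lang α
  | basic : (α → α) → Lang α
  | cjump : (α → Prop) → ℕ → Lang α → Lang α
  | while : (α → Prop) → Lang α → Lang α → Lang α
  | ite : (α → Prop) → Lang α → Lang α → Lang α
  | seq : Lang α → Lang α → Lang α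
  | par : List (Lang α) → Lang α
  | await : (α → Prop) → Lang α → Lang α

inductive PStep {α : Type} (ρ : ℕ → Lang α) : Lang α × α → Lang α × α → Prop
  | basic {f : α → α} {σ : α} : PStep ρ (Lang.basic f, σ) (Lang.skip, f σ)
  | cjumpT {C : α → Prop} {i : ℕ} {p : Lang α} {σ : α} (h : C σ) :
      PStep ρ (Lang.cjump C i p, σ) (ρ i, σ)
  | cjumpF {C : α → Prop} {i : ℕ} {p : Lang α} {σ : α} (h : ¬ C σ) :
      PStep ρ (Lang.cjump C i p, σ) (p, σ)
  | await {C : α → Prop} {p : Lang α} {σ σ' : α} (h : C σ)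
      (n : ℕ) (f : ℕ → Lang α × α)
      (h0 : f 0 = (p, σ)) (hn : f n = (Lang.skip, σ'))
      (hstep : ∀ i, i < n → PStep ρ (f i) (f (i + 1))) :
      PStep ρ (Lang.await C p, σ) (Lang.skip, σ')
  | iteT {C : α → Prop} {p₁ p₂ : Lang α} {σ : α} (h : C σ) :
      PStep ρ (Lang.ite C p₁ p₂, σ) (p₁, σ)
  | iteF {C : α → Prop} {p₁ p₂ : Lang α} {σ : α} (h : ¬ C σ) :
      PStep ρ (Lang.ite C p₁ p₂, σ) (p₂, σ)
  | whileT {C : α → Prop} {p₁ p₂ : Lang α} {σ : α} (h : C σ) :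
      PStep ρ (Lang.while C p₁ p₂, σ)
        (Lang.seq p₁ (Lang.seq Lang.skip (Lang.while C p₁ p₂)), σ)
  | whileF {C : α → Prop} {p₁ p₂ : Lang α} {σ : α} (h : ¬ C σ) :
      PStep ρ (Lang.while C p₁ p₂, σ) (p₂, σ)
  | seq {p₁ p₁' p₂ : Lang α} {σ σ' : α} (h : PStep ρ (p₁, σ) (p₁', σ')) :
      PStep ρ (Lang.seq p₁ p₂, σ) (Lang.seq p₁' p₂, σ')
  | seqSkip {p : Lang α} {σ : α} : PStep ρ (Lang.seq Lang.skip p, σ) (p, σ)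
  | par {ps : List (Lang α)} {i : ℕ} {p' : Lang α} {σ σ' : α}
      (hi : i < ps.length) (h : PStep ρ (ps.get ⟨i, hi⟩, σ) (p', σ')) :
      PStep ρ (Lang.par ps, σ) (Lang.par (ps.set i p'), σ')
  | parSkip {ps : List (Lang α)} {σ : α} (hne : ps ≠ [])
      (h : ∀ p ∈ ps, p = Lang.skip) :
      PStep ρ (Lang.par ps, σ) (Lang.skip, σ)

def IsSimulation {α β : Type} (ρ : ℕ → Lang α) (ρ' : ℕ → Lang β)
    (r : α → β → Prop) (X : Lang α → Lang β → Prop) : Prop :=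
  (∀ p q σ₁ σ₂ q' σ₂', X p q → r σ₁ σ₂ → PStep ρ' (q, σ₂) (q', σ₂') →
      ∃ p' σ₁', PStep ρ (p, σ₁) (p', σ₁') ∧ X p' q' ∧ r σ₁' σ₂') ∧
  (∀ q, X Lang.skip q → q = Lang.skip) ∧
  (∀ p, X p Lang.skip → p = Lang.skip)

def Corr {α β : Type} (ρ : ℕ → Lang α) (p : Lang α) (r : α → β → Prop)
    (ρ' : ℕ → Lang β) (q : Lang β) : Prop :=
  ∃ X, IsSimulation ρ ρ' r X ∧ X p q

def MutCorr {α β : Type} (ρ : ℕ → Lang α) (p : Lang α) (r : α → β → Prop)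
    (ρ' : ℕ → Lang β) (q : Lang β) : Prop :=
  Corr ρ p r ρ' q ∧ Corr ρ' q (fun b a => r a b) ρ p

/-- A finite potential computation of (ρ, p): a nonempty sequence of `n`
configurations `c 0, …, c (n-1)`, where the step from `c i` to `c (i+1)` is
an environment step when `e i = true` (program part unchanged) and a program
step otherwise. -/
def IsComp {α : Type} (ρ : ℕ → Lang α) (p : Lang α)
    (n : ℕ) (c : ℕ → Lang α × α) (e : ℕ → Bool) : Prop :=
  0 < n ∧ (c 0).1 = p ∧
  ∀ i, i + 1 < n →
    (e i = true → (c (i + 1)).1 = (c i).1) ∧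
    (e i = false → PStep ρ (c i) (c (i + 1)))

/-- Environment condition E(R). -/
def EnvC {α : Type} (R : α → α → Prop) (n : ℕ)
    (c : ℕ → Lang α × α) (e : ℕ → Bool) : Prop :=
  ∀ i, i + 1 < n → e i = true → R (c i).2 (c (i + 1)).2

/-- Program condition Pr(G). -/
def ProgC {α : Type} (G : α → α → Prop) (n : ℕ)
    (c : ℕ → Lang α × α) (e : ℕ → Bool) : Prop :=
  ∀ i, i + 1 < n → e i = false → G (c i).2 (c (i + 1)).2

/-- Output condition Out(Q): the state of the first skip-configuration
(if any) satisfies Q. -/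
def OutC {α : Type} (Q : α → Prop) (n : ℕ) (c : ℕ → Lang α × α) : Prop :=
  ∀ i, i < n → (c i).1 = Lang.skip → (∀ j, j < i → (c j).1 ≠ Lang.skip) →
    Q (c i).2

/-- Extended Hoare triple over finite potential computations:
ρ ⊨ {R,P} p {Q,G}. -/
def HoareValid {α : Type} (ρ : ℕ → Lang α) (R : α → α → Prop) (P : α → Prop)
    (p : Lang α) (Q : α → Prop) (G : α → α → Prop) : Prop :=
  ∀ n c e, IsComp ρ p n c e → EnvC R n c e → P (c 0).2 →
    OutC Q n c ∧ ProgC G n c e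


/-! The loop is unfolded one guard step at a time, by strong induction on the length of the
computation. A computation of `p ; w` is, up to its first `skip ; w → w` step, the image of a
computation of `p` under `x ↦ x ; w`; so the triple for `p` applies to it, and by stability of the
midcondition it holds at the moment of that step. After a guard step (of `while` or of
`skip ; while`) the remaining computation is strictly shorter, which closes the induction. -/

def HoareValidFor {α : Type} (ρ : ℕ → Lang α) (R : α → α → Prop) (P : α → Prop)
    (p : Lang α) (Q : α → Prop) (G : α → α → Prop) (n : ℕ) : Prop :=
  ∀ c e, IsComp ρ p n c e → EnvC R n c e → P (c 0).2 → OutC Q n c ∧ ProgC G n c e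

def Lang.seqHead {α : Type} : Lang α → Lang α
  | Lang.seq x _ => x
  | x => x

theorem forall_lt_or_exists_exit {S : ℕ → Prop} (h0 : S 0) (n : ℕ) :
    (∀ i < n, S i) ∨ ∃ m, m + 1 < n ∧ (∀ j ≤ m, S j) ∧ ¬ S (m + 1) := by
  induction n with
  | zero => exact Or.inl fun i hi => absurd hi (Nat.not_lt_zero i)
  | succ n ih =>
    rcases ih with hall | ⟨m, hm, hS, hexit⟩
    · by_cases hn : S n
      · exact Or.inl fun i hi => (Nat.lt_succ_iff_lt_or_eq.mp hi).elim (hall i) (· ▸ hn)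
      · obtain ⟨m, rfl⟩ : ∃ m, n = m + 1 :=
          Nat.exists_eq_succ_of_ne_zero (by rintro rfl; exact hn h0)
        exact Or.inr ⟨m, by omega, fun j hj => hall j (by omega), hn⟩
    · exact Or.inr ⟨m, by omega, hS, hexit⟩

namespace Lang

variable {α : Type}

theorem seq_ne_right (x w : Lang α) : seq x w ≠ w := by
  intro h
  have := congrArg sizeOf h
  simp only [seq.sizeOf_spec] at this
  omega

end Lang

section Steps

variable {α : Type} {ρ : ℕ → Lang α}

theorem PStep.not_skip {σ : α} {y : Lang α × α} : ¬ PStep ρ (Lang.skip, σ) y := nofun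

theorem PStep.while_inv {C : α → Prop} {p q y : Lang α} {σ σ' : α}
    (h : PStep ρ (Lang.while C p q, σ) (y, σ')) :
    (C σ ∧ y = Lang.seq p (Lang.seq Lang.skip (Lang.while C p q)) ∧ σ' = σ) ∨
      (¬ C σ ∧ y = q ∧ σ' = σ) := by
  cases h with
  | whileT hC => exact Or.inl ⟨hC, rfl, rfl⟩
  | whileF hC => exact Or.inr ⟨hC, rfl, rfl⟩

theorem PStep.seq_inv {x w y : Lang α} {σ σ' : α} (h : PStep ρ (Lang.seq x w, σ) (y, σ')) :
    (∃ x', y = Lang.seq x' w ∧ PStep ρ (x, σ) (x', σ')) ∨ (x = Lang.skip ∧ y = w ∧ σ' = σ) := by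
  cases h with
  | seq h => exact Or.inl ⟨_, rfl, h⟩
  | seqSkip => exact Or.inr ⟨rfl, rfl, rfl⟩

theorem PStep.seq_skip_inv {w y : Lang α} {σ σ' : α}
    (h : PStep ρ (Lang.seq Lang.skip w, σ) (y, σ')) : y = w ∧ σ' = σ := by
  rcases h.seq_inv with ⟨_, _, h⟩ | ⟨_, hy, hσ⟩
  · exact absurd h PStep.not_skip
  · exact ⟨hy, hσ⟩

end Steps

section Computations

variable {α : Type} {ρ : ℕ → Lang α} {R G : α → α → Prop} {P Q : α → Prop} {p : Lang α}
  {n : ℕ} {c : ℕ → Lang α × α} {e : ℕ → Bool}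

theorem IsComp.drop (hc : IsComp ρ p n c e) {k : ℕ} (hk : k < n) :
    IsComp ρ (c k).1 (n - k) (fun i => c (i + k)) (fun i => e (i + k)) := by
  refine ⟨by omega, by simp, fun i hi => ?_⟩
  dsimp only
  rw [show i + 1 + k = i + k + 1 by omega]
  exact hc.2.2 (i + k) (by omega)

theorem EnvC.drop (hE : EnvC R n c e) (k : ℕ) :
    EnvC R (n - k) (fun i => c (i + k)) (fun i => e (i + k)) := by
  intro i hi he
  dsimp only
  rw [show i + 1 + k = i + k + 1 by omega]
  exact hE (i + k) (by omega) he

theorem EnvC.take (hE : EnvC R n c e) {m : ℕ} (hm : m ≤ n) : EnvC R m c e :=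
  fun i hi => hE i (by omega)

theorem outC_progC_of_drop (k : ℕ) (hk : k ≤ n) (hskip : ∀ j < k, (c j).1 ≠ Lang.skip)
    (hG : ∀ j < k, j + 1 < n → e j = false → G (c j).2 (c (j + 1)).2)
    (hsuf : k < n → OutC Q (n - k) (fun i => c (i + k)) ∧
      ProgC G (n - k) (fun i => c (i + k)) (fun i => e (i + k))) :
    OutC Q n c ∧ ProgC G n c e := by
  constructor
  · intro i hi hi_skip hfirst
    obtain ⟨d, rfl⟩ : ∃ d, i = d + k := ⟨i - k, by
      have := mt (hskip i) (not_not.mpr hi_skip); omega⟩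
    exact (hsuf (by omega)).1 d (by omega) hi_skip fun j hj => hfirst (j + k) (by omega)
  · intro i hi he
    by_cases hik : i < k
    · exact hG i hik hi he
    · obtain ⟨d, rfl⟩ : ∃ d, i = d + k := ⟨i - k, by omega⟩
      have : G (c (d + k)).2 (c (d + 1 + k)).2 := (hsuf (by omega)).2 d (by omega) he
      rwa [show d + 1 + k = d + k + 1 by omega] at this

/-- Once at `skip`, only environment steps remain, so `Q` propagates from the first
`skip`-configuration to all later ones. -/
theorem OutC.of_skip (hout : OutC Q n c) (hc : IsComp ρ p n c e) (hE : EnvC R n c e)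
    (hQ : ∀ σ σ', Q σ → R σ σ' → Q σ') {k : ℕ} (hk : k < n)
    (hskip : (c k).1 = Lang.skip) : Q (c k).2 := by
  classical
  have hex : ∃ j, (c j).1 = Lang.skip := ⟨k, hskip⟩
  have hjk : Nat.find hex ≤ k := Nat.find_min' hex hskip
  have hQj : Q (c (Nat.find hex)).2 :=
    hout _ (by omega) (Nat.find_spec hex) fun j hj => Nat.find_min hex hj
  suffices ∀ i, Nat.find hex ≤ i → i ≤ k → (c i).1 = Lang.skip ∧ Q (c i).2 from
    (this k hjk le_rfl).2
  intro i hi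
  induction i, hi using Nat.le_induction with
  | base => exact fun _ => ⟨Nat.find_spec hex, hQj⟩
  | succ i _ ih =>
    intro hik
    obtain ⟨hi_skip, hQi⟩ := ih (by omega)
    have hstep := hc.2.2 i (by omega)
    cases he : e i with
    | false =>
      have h := hstep.2 he
      rw [show c i = (Lang.skip, (c i).2) from Prod.ext hi_skip rfl] at h
      exact absurd h PStep.not_skip
    | true => exact ⟨(hstep.1 he).trans hi_skip, hQ _ _ hQi (hE i (by omega) he)⟩

end Computations

section Rules

variable {α : Type} {ρ : ℕ → Lang α} {R G : α → α → Prop} {P P' Q : α → Prop} {p : Lang α}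
  {n : ℕ}

theorem HoareValidFor.mono_pre (h : HoareValidFor ρ R P p Q G n) (hP : ∀ σ, P' σ → P σ) :
    HoareValidFor ρ R P' p Q G n :=
  fun c e hc hE hP' => h c e hc hE (hP _ hP')

theorem HoareValid.mono_pre (h : HoareValid ρ R P p Q G) (hP : ∀ σ, P' σ → P σ) :
    HoareValid ρ R P' p Q G :=
  fun n => HoareValidFor.mono_pre (h n) hP

theorem HoareValidFor.of_silent_pstep (hP : ∀ σ σ', P σ → R σ σ' → P σ') (hG : ∀ a, G a a)
    (hp : p ≠ Lang.skip)
    (hnext : ∀ σ p' σ', P σ → PStep ρ (p, σ) (p', σ') →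
      σ' = σ ∧ ∀ k < n, HoareValidFor ρ R (· = σ) p' Q G k) :
    HoareValidFor ρ R P p Q G n := by
  induction n with
  | zero => exact fun _ _ hc => absurd hc.1 (Nat.lt_irrefl 0)
  | succ n ih =>
    intro c e hc hE hP0
    have hc0 : c 0 = (p, (c 0).2) := Prod.ext hc.2.1 rfl
    refine outC_progC_of_drop 1 (by omega) (fun j hj => ?_) (fun j hj hjn he => ?_) fun h1n => ?_
    · rwa [show j = 0 by omega, hc.2.1]
    · obtain rfl : j = 0 := by omega
      have hstep := (hc.2.2 0 hjn).2 he
      rw [hc0] at hstep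
      rw [(hnext _ _ _ hP0 hstep).1]
      exact hG _
    have hsuf := hc.drop h1n
    cases he : e 0 with
    | true =>
      have hc1 : (c 1).1 = p := ((hc.2.2 0 h1n).1 he).trans hc.2.1
      rw [hc1] at hsuf
      refine ih (fun σ p' σ' hσ hstep => ?_) _ _ hsuf (EnvC.drop hE 1)
        (hP _ _ hP0 (hE 0 h1n he))
      exact (hnext σ p' σ' hσ hstep).imp_right fun h k hk => h k (by omega)
    | false =>
      have hstep := (hc.2.2 0 h1n).2 he
      rw [hc0] at hstep
      obtain ⟨hσ, hvalid⟩ := hnext _ _ _ hP0 hstep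
      exact hvalid (n + 1 - 1) (by omega) _ _ hsuf (EnvC.drop hE 1) hσ

theorem IsComp.seqHead {p₁ w : Lang α} {c : ℕ → Lang α × α} {e : ℕ → Bool}
    (hc : IsComp ρ (Lang.seq p₁ w) n c e) {L : ℕ} (hL : 0 < L) (hLn : L ≤ n)
    (hin : ∀ j < L, ∃ x, (c j).1 = Lang.seq x w) :
    IsComp ρ p₁ L (fun i => ((c i).1.seqHead, (c i).2)) e := by
  refine ⟨hL, by simp [hc.2.1, Lang.seqHead], fun i hi => ⟨fun he => ?_, fun he => ?_⟩⟩
  · simp only [(hc.2.2 i (by omega)).1 he]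
  obtain ⟨x, hx⟩ := hin i (by omega)
  obtain ⟨x', hx'⟩ := hin (i + 1) hi
  have hstep := (hc.2.2 i (by omega)).2 he
  rw [show c i = (Lang.seq x w, (c i).2) from Prod.ext hx rfl,
    show c (i + 1) = (Lang.seq x' w, (c (i + 1)).2) from Prod.ext hx' rfl] at hstep
  simp only [hx, hx', Lang.seqHead]
  rcases hstep.seq_inv with ⟨_, hy, hstep⟩ | ⟨_, hy, _⟩
  · rwa [(Lang.seq.inj hy).1]
  · exact absurd hy (Lang.seq_ne_right x' w)

theorem HoareValidFor.seq {p₁ w : Lang α} {Pmid : α → Prop} (hp : HoareValid ρ R P p₁ Pmid G)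
    (hmid : ∀ σ σ', Pmid σ → R σ σ' → Pmid σ') (hG : ∀ a, G a a)
    (hw : ∀ k < n, HoareValidFor ρ R Pmid w Q G k) :
    HoareValidFor ρ R P (Lang.seq p₁ w) Q G n := by
  intro c e hc hE hP0
  rcases forall_lt_or_exists_exit (S := fun i => ∃ x, (c i).1 = Lang.seq x w) ⟨p₁, hc.2.1⟩ n
    with hin | ⟨m, hmn, hin, hexit⟩
  · refine ⟨fun i hi hskip _ => ?_, (hp n _ e (hc.seqHead hc.1 le_rfl hin) hE hP0).2⟩
    obtain ⟨x, hx⟩ := hin i hi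
    exact absurd (hskip ▸ hx) nofun
  obtain ⟨x, hx⟩ := hin m le_rfl
  have hexit_step : x = Lang.skip ∧ c (m + 1) = (w, (c m).2) := by
    cases he : e m with
    | true => exact absurd ⟨x, ((hc.2.2 m hmn).1 he).trans hx⟩ hexit
    | false =>
      have hstep := (hc.2.2 m hmn).2 he
      rw [show c m = (Lang.seq x w, (c m).2) from Prod.ext hx rfl] at hstep
      rcases hstep.seq_inv with ⟨x', hy, _⟩ | ⟨hx_skip, hy, hσ⟩
      · exact absurd ⟨x', hy⟩ hexit
      · exact ⟨hx_skip, Prod.ext hy hσ⟩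
  obtain ⟨rfl, hcm⟩ := hexit_step
  have hproj := hc.seqHead (L := m + 1) (by omega) (by omega) fun j hj => hin j (by omega)
  obtain ⟨hout, hprog⟩ := hp (m + 1) _ e hproj (hE.take (by omega)) hP0
  have hmid_m : Pmid (c m).2 :=
    hout.of_skip hproj (hE.take (by omega)) hmid (k := m) (by omega) (by simp [hx, Lang.seqHead])
  refine outC_progC_of_drop (m + 1) (by omega) (fun j hj => ?_) (fun j hj hjn he => ?_) fun hm => ?_
  · obtain ⟨x, hx⟩ := hin j (by omega)
    rw [hx]
    exact nofun
  · rcases Nat.lt_or_ge j m with hjm | hjm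
    · exact hprog j (by omega) he
    · obtain rfl : j = m := by omega
      rw [hcm]
      exact hG _
  have hsuf := hc.drop hm
  rw [hcm] at hsuf
  exact hw _ (by omega) _ _ hsuf (hE.drop _) (by simpa [hcm] using hmid_m)

end Rules

theorem while_rule {α : Type} (ρ : ℕ → Lang α)
    (G : α → α → Prop) (hGrefl : ∀ a, G a a)
    (R : α → α → Prop) (P Q C : α → Prop) (p q : Lang α)
    (h1 : ∀ σ σ', P σ → R σ σ' → P σ')
    (h2 : HoareValid ρ R (fun σ => P σ ∧ C σ) p P G)
    (h3 : HoareValid ρ R (fun σ => P σ ∧ ¬ C σ) q Q G) :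
    HoareValid ρ R P (Lang.while C p q) Q G := by
  suffices ∀ n, HoareValidFor ρ R P (Lang.while C p q) Q G n from this
  intro n
  induction n using Nat.strong_induction_on with
  | _ n ih =>
  refine HoareValidFor.of_silent_pstep h1 hGrefl nofun fun σ p' σ' hσ hstep => ?_
  rcases hstep.while_inv with ⟨hC, rfl, hσ'⟩ | ⟨hC, rfl, hσ'⟩
  · refine ⟨hσ', fun k hk => ?_⟩
    refine HoareValidFor.seq (h2.mono_pre ?_) h1 hGrefl fun j hj => ?_
    · rintro _ rfl
      exact ⟨hσ, hC⟩
    refine HoareValidFor.of_silent_pstep h1 hGrefl nofun fun τ p'' τ' hτ hstep => ?_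
    obtain ⟨rfl, rfl⟩ := hstep.seq_skip_inv
    exact ⟨rfl, fun i hi => (ih i (by omega)).mono_pre fun _ h => h ▸ hτ⟩
  · exact ⟨hσ', fun k _ => h3.mono_pre (P' := (· = σ)) (fun _ h => h ▸ ⟨hσ, hC⟩) k⟩
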